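/- Let B be a Young function and {w_ε} a family in L^B(Ω) with ∫_{Λ_ε} B(|w_ε|) dx → 0 as ε → 0. Then ∫_Ω B(|w_ε|) dx − (1/|Y|) ∫_{Ω×Y} B(|T_ε(w_ε)|) dx dy → 0 as ε → 0. -/

import Mathlib

open MeasureTheory Filter Set Topology

noncomputable section

def IsYoung (B : ℝ → ℝ) : Prop :=
  ContinuousOn B (Set.Ici 0) ∧ ConvexOn ℝ (Set.Ici 0) B ∧
  (∀ t : ℝ, 0 ≤ t → 0 ≤ B t) ∧ (∀ t : ℝ, 0 < t → 0 < B t) ∧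
  Tendsto (fun t => B t / t) (𝓝[>] (0:ℝ)) (𝓝 0) ∧
  Tendsto (fun t => B t / t) atTop atTop

def youngConj (B : ℝ → ℝ) (t : ℝ) : ℝ := sSup ((fun s => s * t - B s) '' Set.Ici 0)

def unitCell (N : ℕ) : Set (Fin N → ℝ) := Set.univ.pi fun _ => Set.Ioo (0:ℝ) 1

def cellOf {N : ℕ} (ε : ℝ) (ξ : Fin N → ℤ) : Set (Fin N → ℝ) :=
  {x | ∀ i, x i ∈ Set.Ioo (ε * (ξ i : ℝ)) (ε * ((ξ i : ℝ) + 1))}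

def bigXi {N : ℕ} (ε : ℝ) (Ω : Set (Fin N → ℝ)) : Set (Fin N → ℤ) := {ξ | cellOf ε ξ ⊆ Ω}

def hatOmega {N : ℕ} (ε : ℝ) (Ω : Set (Fin N → ℝ)) : Set (Fin N → ℝ) :=
  interior (⋃ ξ ∈ bigXi ε Ω, closure (cellOf ε ξ))

def lamEps {N : ℕ} (ε : ℝ) (Ω : Set (Fin N → ℝ)) : Set (Fin N → ℝ) := Ω \ hatOmega ε Ω

open Classical in
def unfold {N : ℕ} (ε : ℝ) (Ω : Set (Fin N → ℝ)) (φ : (Fin N → ℝ) → ℝ)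
    (x y : Fin N → ℝ) : ℝ :=
  if x ∈ hatOmega ε Ω then φ (fun i => ε * ((⌊x i / ε⌋ : ℝ) + y i)) else 0

/-- Luxemburg norm of `u` with respect to the Young function `B` and the measure `μ`. -/
def luxNorm {α : Type*} [MeasurableSpace α] (μ : MeasureTheory.Measure α) (B : ℝ → ℝ)
    (u : α → ℝ) : ℝ :=
  sInf {k : ℝ | 0 < k ∧ ∫⁻ x, ENNReal.ofReal (B (|u x| / k)) ∂μ ≤ 1}

/-! For `ε > 0` the unfolding identity is exact, with no error term. If `x` lies in an open cell
`ε(ξ + Y) ⊆ Ω`, then `T_ε w (x, ·)` is `w` rescaled from that cell to `Y`, so its integral over `Y`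
is the average of `w` over the cell; integrating this constant over the cell in `x` gives back
`∫_cell w`. The open cells fill `Ω̂_ε` up to their boundaries, which are null, hence
`∫_{Ω×Y} T_ε φ = ∫_{Ω̂_ε} φ` for every measurable `φ ≥ 0`. As `B 0 = 0` gives
`B |T_ε w| = T_ε (B |w|)` and `|Y| = 1`, the difference in the theorem is exactly
`∫_{Λ_ε} B |w_ε|`. -/

open Function
open scoped ENNReal

variable {N : ℕ}

lemma cellOf_eq_pi (ε : ℝ) (ξ : Fin N → ℤ) :
    cellOf ε ξ = univ.pi fun i => Ioo (ε * ξ i) (ε * (ξ i + 1)) := by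
  ext x; simp [cellOf, Set.mem_pi]

lemma isOpen_cellOf (ε : ℝ) (ξ : Fin N → ℤ) : IsOpen (cellOf ε ξ) := by
  rw [cellOf_eq_pi]; exact isOpen_set_pi finite_univ fun _ _ => isOpen_Ioo

lemma measurableSet_cellOf (ε : ℝ) (ξ : Fin N → ℤ) : MeasurableSet (cellOf ε ξ) :=
  (isOpen_cellOf ε ξ).measurableSet

lemma convex_cellOf (ε : ℝ) (ξ : Fin N → ℤ) : Convex ℝ (cellOf ε ξ) := by
  rw [cellOf_eq_pi]; exact convex_pi fun _ _ => convex_Ioo _ _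

lemma volume_cellOf {ε : ℝ} (hε : 0 < ε) (ξ : Fin N → ℤ) :
    volume (cellOf ε ξ) = ENNReal.ofReal (ε ^ N) := by
  simp [cellOf_eq_pi, Real.volume_pi_Ioo, mul_add, ENNReal.ofReal_pow hε.le]

lemma volume_closure_diff_cellOf (ε : ℝ) (ξ : Fin N → ℤ) :
    volume (closure (cellOf ε ξ) \ cellOf ε ξ) = 0 := by
  simpa [frontier, (isOpen_cellOf ε ξ).interior_eq] using
    Convex.addHaar_frontier volume (convex_cellOf ε ξ)

lemma floor_div_eq_of_mem_cellOf {ε : ℝ} (hε : 0 < ε) {ξ : Fin N → ℤ} {x : Fin N → ℝ}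
    (hx : x ∈ cellOf ε ξ) (i : Fin N) : ⌊x i / ε⌋ = ξ i := by
  obtain ⟨hlo, hhi⟩ := hx i
  rw [Int.floor_eq_iff, le_div_iff₀ hε, div_lt_iff₀ hε]
  constructor <;> linarith

lemma pairwise_disjoint_cellOf {ε : ℝ} (hε : 0 < ε) :
    Pairwise (Disjoint on fun ξ : Fin N → ℤ => cellOf ε ξ) := fun _ _ hne =>
  disjoint_left.2 fun _ hx hx' => hne <| funext fun i =>
    (floor_div_eq_of_mem_cellOf hε hx i).symm.trans (floor_div_eq_of_mem_cellOf hε hx' i)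

lemma volume_unitCell : volume (unitCell N) = 1 := by
  simp [unitCell, Real.volume_pi_Ioo]

section HatOmega

variable {ε : ℝ} {Ω : Set (Fin N → ℝ)}

lemma measurableSet_hatOmega (ε : ℝ) (Ω : Set (Fin N → ℝ)) : MeasurableSet (hatOmega ε Ω) :=
  isOpen_interior.measurableSet

lemma cellOf_subset_hatOmega {ξ : Fin N → ℤ} (hξ : ξ ∈ bigXi ε Ω) :
    cellOf ε ξ ⊆ hatOmega ε Ω :=
  interior_maximal
    (subset_closure.trans <| subset_biUnion_of_mem (u := fun ξ => closure (cellOf ε ξ)) hξ)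
    (isOpen_cellOf ε ξ)

lemma biUnion_cellOf_subset_inter_hatOmega :
    ⋃ ξ ∈ bigXi ε Ω, cellOf ε ξ ⊆ Ω ∩ hatOmega ε Ω :=
  iUnion₂_subset fun _ hξ => subset_inter hξ (cellOf_subset_hatOmega hξ)

lemma hatOmega_ae_eq_biUnion_cellOf :
    hatOmega ε Ω =ᵐ[volume] ⋃ ξ ∈ bigXi ε Ω, cellOf ε ξ := by
  refine ae_eq_set.2 ⟨measure_mono_null ?_ <| (measure_biUnion_null_iff
    (bigXi ε Ω).to_countable).2 fun ξ _ => volume_closure_diff_cellOf ε ξ, ?_⟩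
  · rintro x ⟨hx, hxU⟩
    obtain ⟨ξ, hξ, hxξ⟩ := mem_iUnion₂.1 (interior_subset hx)
    exact mem_biUnion hξ ⟨hxξ, fun h => hxU (mem_biUnion hξ h)⟩
  · simp [sdiff_eq_empty.2 (biUnion_cellOf_subset_inter_hatOmega.trans inter_subset_right)]

lemma inter_hatOmega_ae_eq : (Ω ∩ hatOmega ε Ω : Set (Fin N → ℝ)) =ᵐ[volume] hatOmega ε Ω :=
  inter_subset_right.eventuallyLE.antisymm <| hatOmega_ae_eq_biUnion_cellOf.le.trans
    biUnion_cellOf_subset_inter_hatOmega.eventuallyLE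

lemma setLIntegral_hatOmega_eq_tsum (hε : 0 < ε) (F : (Fin N → ℝ) → ℝ≥0∞) :
    ∫⁻ x in hatOmega ε Ω, F x = ∑' ξ : bigXi ε Ω, ∫⁻ x in cellOf ε ξ, F x := by
  rw [setLIntegral_congr hatOmega_ae_eq_biUnion_cellOf, lintegral_biUnion (bigXi ε Ω).to_countable
    (fun ξ _ => measurableSet_cellOf ε ξ) ((pairwise_disjoint_cellOf hε).set_pairwise _)]

end HatOmega

namespace IsYoung

variable {B : ℝ → ℝ}

lemma map_zero (hB : IsYoung B) : B 0 = 0 := by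
  obtain ⟨hcont, -, -, -, hslope, -⟩ := hB
  have hB_cont : Tendsto B (𝓝[>] 0) (𝓝 (B 0)) :=
    (hcont 0 self_mem_Ici).mono_left (nhdsWithin_mono 0 Ioi_subset_Ici_self)
  have hB_lim : Tendsto B (𝓝[>] 0) (𝓝 0) := by
    have h := hslope.mul (tendsto_id.mono_left (nhdsWithin_le_nhds (a := (0 : ℝ))))
    rw [mul_zero] at h
    refine h.congr' ?_
    filter_upwards [self_mem_nhdsWithin] with t (ht : 0 < t)
    exact div_mul_cancel₀ (B t) ht.ne'
  exact tendsto_nhds_unique hB_cont hB_lim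

lemma continuous_comp_abs (hB : IsYoung B) : Continuous fun t => B |t| :=
  hB.1.comp_continuous continuous_abs fun t => abs_nonneg t

lemma nonneg_comp_abs (hB : IsYoung B) (t : ℝ) : 0 ≤ B |t| :=
  hB.2.2.1 _ (abs_nonneg t)

end IsYoung

section Unfolding

variable {ε : ℝ} {Ω : Set (Fin N → ℝ)} {φ : (Fin N → ℝ) → ℝ}

lemma unfold_of_mem_cellOf (hε : 0 < ε) {ξ : Fin N → ℤ} (hξ : ξ ∈ bigXi ε Ω)
    {x : Fin N → ℝ} (hx : x ∈ cellOf ε ξ) (y : Fin N → ℝ) :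
    unfold ε Ω φ x y = φ (fun i => ε * (ξ i + y i)) := by
  simp [unfold, cellOf_subset_hatOmega hξ hx, floor_div_eq_of_mem_cellOf hε hx]

lemma unfold_comp_of_zero {G : ℝ → ℝ} (hG : G 0 = 0) (x y : Fin N → ℝ) :
    unfold ε Ω (fun z => G (φ z)) x y = G (unfold ε Ω φ x y) := by
  unfold unfold; split_ifs <;> simp [hG]

lemma unfold_nonneg (hφ : 0 ≤ φ) (x y : Fin N → ℝ) : 0 ≤ unfold ε Ω φ x y := by
  unfold unfold; split_ifs
  exacts [hφ _, le_rfl]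

lemma measurable_unfold (hφ : Measurable φ) :
    Measurable fun p : (Fin N → ℝ) × (Fin N → ℝ) => unfold ε Ω φ p.1 p.2 := by
  refine Measurable.ite (measurable_fst (measurableSet_hatOmega ε Ω)) (hφ.comp ?_) measurable_const
  fun_prop

end Unfolding

section ChangeOfVariables

variable {ε : ℝ}

lemma map_volume_add_smul (c : Fin N → ℝ) (hε : 0 < ε) :
    Measure.map (fun y : Fin N → ℝ => c + ε • y) volume = (ENNReal.ofReal (ε ^ N))⁻¹ • volume := by
  have hcomp : (fun y : Fin N → ℝ => c + ε • y) = (c + ·) ∘ (ε • ·) := rfl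
  rw [hcomp, ← Measure.map_map (measurable_const_add c) (measurable_const_smul ε),
    Measure.map_addHaar_smul volume hε.ne', Measure.map_smul, map_add_left_eq_self,
    Module.finrank_fin_fun, abs_of_nonneg (by positivity),
    ENNReal.ofReal_inv_of_pos (by positivity)]

lemma preimage_cellOf_eq_unitCell (hε : 0 < ε) (ξ : Fin N → ℤ) :
    (fun (y : Fin N → ℝ) i => ε * (ξ i + y i)) ⁻¹' cellOf ε ξ = unitCell N := by
  ext y
  simp only [cellOf, unitCell, mem_preimage, Set.mem_pi, mem_univ, true_implies, mem_Ioo]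
  refine forall_congr' fun i => ?_
  rw [mul_lt_mul_iff_right₀ hε, mul_lt_mul_iff_right₀ hε]
  constructor <;> rintro ⟨h₁, h₂⟩ <;> constructor <;> linarith

lemma setLIntegral_unitCell_eq_laverage_cellOf (hε : 0 < ε) (ξ : Fin N → ℤ) {h : (Fin N → ℝ) → ℝ≥0∞}
    (hh : Measurable h) :
    ∫⁻ y in unitCell N, h (fun i => ε * (ξ i + y i)) = ⨍⁻ z in cellOf ε ξ, h z ∂volume := by
  have hT : (fun (y : Fin N → ℝ) i => ε * (ξ i + y i)) = fun y => (fun i => ε * ξ i) + ε • y := by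
    ext y i; simp [mul_add]
  have hT_meas : Measurable fun (y : Fin N → ℝ) i => ε * (ξ i + y i) := by fun_prop
  rw [← preimage_cellOf_eq_unitCell hε ξ, ← lintegral_map hh hT_meas,
    ← Measure.restrict_map hT_meas (measurableSet_cellOf ε ξ), hT, map_volume_add_smul _ hε,
    Measure.restrict_smul, lintegral_smul_measure, laverage_eq, Measure.restrict_apply_univ,
    volume_cellOf hε, smul_eq_mul, ENNReal.div_eq_inv_mul]

end ChangeOfVariables

section UnfoldingIntegral

variable {ε : ℝ} {Ω : Set (Fin N → ℝ)} {φ : (Fin N → ℝ) → ℝ}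

lemma setLIntegral_unitCell_unfold_eq_laverage (hε : 0 < ε) (hφ : Measurable φ)
    {ξ : Fin N → ℤ} (hξ : ξ ∈ bigXi ε Ω) {x : Fin N → ℝ} (hx : x ∈ cellOf ε ξ) :
    ∫⁻ y in unitCell N, ENNReal.ofReal (unfold ε Ω φ x y)
      = ⨍⁻ z in cellOf ε ξ, ENNReal.ofReal (φ z) ∂volume := by
  simp_rw [unfold_of_mem_cellOf hε hξ hx]
  exact setLIntegral_unitCell_eq_laverage_cellOf hε ξ hφ.ennreal_ofReal

lemma setLIntegral_prod_unitCell_unfold (hε : 0 < ε) (hφ : Measurable φ) :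
    ∫⁻ p in Ω ×ˢ unitCell N, ENNReal.ofReal (unfold ε Ω φ p.1 p.2)
      = ∫⁻ x in hatOmega ε Ω, ENNReal.ofReal (φ x) := by
  set F : (Fin N → ℝ) → ℝ≥0∞ := fun x => ∫⁻ y in unitCell N, ENNReal.ofReal (unfold ε Ω φ x y)
  have hF_supp : F = (hatOmega ε Ω).indicator F := by
    ext x
    by_cases hx : x ∈ hatOmega ε Ω
    · simp [hx]
    · simp [F, hx, unfold]
  have hF_cell : ∀ ξ ∈ bigXi ε Ω,
      ∫⁻ x in cellOf ε ξ, F x = ∫⁻ x in cellOf ε ξ, ENNReal.ofReal (φ x) := by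
    intro ξ hξ
    have : IsFiniteMeasure (volume.restrict (cellOf ε ξ)) :=
      isFiniteMeasure_restrict.2 (by simp [volume_cellOf hε])
    rw [setLIntegral_congr_fun (measurableSet_cellOf ε ξ) fun x hx =>
      setLIntegral_unitCell_unfold_eq_laverage hε hφ hξ hx, lintegral_laverage]
  calc ∫⁻ p in Ω ×ˢ unitCell N, ENNReal.ofReal (unfold ε Ω φ p.1 p.2)
      = ∫⁻ x in Ω, F x := by
        rw [Measure.volume_eq_prod, ← Measure.prod_restrict,
          lintegral_prod _ (measurable_unfold hφ).ennreal_ofReal.aemeasurable]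
    _ = ∫⁻ x in hatOmega ε Ω, F x := by
        conv_lhs => rw [hF_supp]
        rw [lintegral_indicator (measurableSet_hatOmega ε Ω), Measure.restrict_restrict
          (measurableSet_hatOmega ε Ω), inter_comm, Measure.restrict_congr_set inter_hatOmega_ae_eq]
    _ = ∫⁻ x in hatOmega ε Ω, ENNReal.ofReal (φ x) := by
        rw [setLIntegral_hatOmega_eq_tsum hε, setLIntegral_hatOmega_eq_tsum hε]
        exact tsum_congr fun ξ => hF_cell ξ ξ.2

lemma setIntegral_prod_unitCell_unfold (hε : 0 < ε) (hφ : Measurable φ) (hφ₀ : 0 ≤ φ) :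
    ∫ p in Ω ×ˢ unitCell N, unfold ε Ω φ p.1 p.2 = ∫ x in hatOmega ε Ω, φ x := by
  have h_nonneg : ∀ p : (Fin N → ℝ) × (Fin N → ℝ), 0 ≤ unfold ε Ω φ p.1 p.2 :=
    fun p => unfold_nonneg hφ₀ p.1 p.2
  rw [integral_eq_lintegral_of_nonneg_ae (ae_of_all _ h_nonneg)
      (measurable_unfold hφ).aestronglyMeasurable,
    integral_eq_lintegral_of_nonneg_ae (ae_of_all _ hφ₀) hφ.aestronglyMeasurable,
    setLIntegral_prod_unitCell_unfold hε hφ]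

theorem setIntegral_sub_setIntegral_unfold (hε : 0 < ε) (hφ : Measurable φ) (hφ₀ : 0 ≤ φ)
    (hφΩ : IntegrableOn φ Ω) :
    (∫ x in Ω, φ x) - ∫ p in Ω ×ˢ unitCell N, unfold ε Ω φ p.1 p.2 = ∫ x in lamEps ε Ω, φ x := by
  have hsplit := integral_inter_add_sdiff (measurableSet_hatOmega ε Ω) hφΩ
  rw [setIntegral_prod_unitCell_unfold hε hφ hφ₀, ← setIntegral_congr_set inter_hatOmega_ae_eq,
    lamEps]
  linarith

end UnfoldingIntegral

theorem uci_orlicz_general (N : ℕ) (B : ℝ → ℝ) (hB : IsYoung B)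
    (Ω : Set (Fin N → ℝ))
    (w : ℝ → (Fin N → ℝ) → ℝ) (hmeas : ∀ ε : ℝ, Measurable (w ε))
    (hmem : ∀ ε : ℝ, 0 < ε → MeasureTheory.IntegrableOn (fun x => B |w ε x|) Ω)
    (h0 : Tendsto (fun ε : ℝ => ∫ x in lamEps ε Ω, B |w ε x|) (𝓝[>] (0:ℝ)) (𝓝 0)) :
    Tendsto (fun ε : ℝ =>
        (∫ x in Ω, B |w ε x|) -
          (1 / (MeasureTheory.volume (unitCell N)).toReal) *
            ∫ p in Ω ×ˢ unitCell N, B |unfold ε Ω (w ε) p.1 p.2|)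
      (𝓝[>] (0:ℝ)) (𝓝 0) := by
  refine h0.congr' ?_
  filter_upwards [self_mem_nhdsWithin] with ε (hε : 0 < ε)
  have hB_unfold : ∀ x y, unfold ε Ω (fun x => B |w ε x|) x y = B |unfold ε Ω (w ε) x y| :=
    unfold_comp_of_zero (G := fun t => B |t|) (by simp [hB.map_zero])
  simp_rw [volume_unitCell, ENNReal.toReal_one, div_one, one_mul, ← hB_unfold]
  exact (setIntegral_sub_setIntegral_unfold (φ := fun x => B |w ε x|) hε
    (hB.continuous_comp_abs.measurable.comp (hmeas ε))
    (fun x => hB.nonneg_comp_abs _) (hmem ε hε)).symm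

/-- Unfolding criterion for integrals (u.c.i.) in the Orlicz setting: if the modulars of
`w_ε` on the boundary layers `Λ_ε` vanish, then the unfolded modular converges to the
original one. -/
theorem uci_orlicz (N : ℕ) (B : ℝ → ℝ) (hB : IsYoung B)
    (Ω : Set (Fin N → ℝ)) (hΩopen : IsOpen Ω) (hΩbdd : Bornology.IsBounded Ω)
    (w : ℝ → (Fin N → ℝ) → ℝ) (hmeas : ∀ ε : ℝ, Measurable (w ε))
    (hmem : ∀ ε : ℝ, 0 < ε → MeasureTheory.IntegrableOn (fun x => B |w ε x|) Ω)
    (h0 : Tendsto (fun ε : ℝ => ∫ x in lamEps ε Ω, B |w ε x|) (𝓝[>] (0:ℝ)) (𝓝 0)) :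
    Tendsto (fun ε : ℝ =>
        (∫ x in Ω, B |w ε x|) -
          (1 / (MeasureTheory.volume (unitCell N)).toReal) *
            ∫ p in Ω ×ˢ unitCell N, B |unfold ε Ω (w ε) p.1 p.2|)
      (𝓝[>] (0:ℝ)) (𝓝 0) :=
  uci_orlicz_general N B hB Ω w hmeas hmem h0
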